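/- arXiv:2005.10076 — 2 statements merged into one kernel-verified Lean document; each statement's English description precedes it below -/
import Mathlib

section
/- Let $\widehat\Omega \subset \mathbb{R}^d$ be measurable, $\rho \geq 0$ and $g$ measurable radial kernel profiles with $g(|\cdot|) \in L^1(\mathbb{R}^d)$, $G(x) = \int_{\widehat\Omega} g(|y-x|)\,dy$. Suppose the form $a_\rho(u,u) = \int_{\widehat\Omega}\int_{\widehat\Omega}\rho(|y-x|)(u(y)-u(x))^2\,dy\,dx$ satisfies $\|u\|_{L^2(\Omega)}^2 \leq \kappa\, a_\rho(u,u)$ for all $u$ in a subspace $V$ vanishing on $\Omega_I$. If $|\lambda| < \left[2\kappa(\|g(|\cdot|)\|_{L^1(\mathbb{R}^d)} + \|G\|_{L^\infty(\widehat\Omega)})\right]^{-1}$, then for all $u \in V$, $a_\rho(u,u) + \lambda\, a_g(u,u) \geq \left(1 - 2|\lambda|\kappa(\|g(|\cdot|)\|_{L^1} + \|G\|_{L^\infty})\right)a_\rho(u,u) \geq 0$, where $a_g(u,u) = \int_{\widehat\Omega}\int_{\widehat\Omega} g(|y-x|)(u(y)-u(x))^2\,dy\,dx$. -/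
/-!
Write `K x y = g ‖y - x‖`, a symmetric kernel. Expanding `(u y - u x)²` and using the symmetry,
the energy `a_g(u,u)` equals `2 ∫∫ K x y u(x)² - 2 ∫∫ K x y u(x) u(y)`. Integrating first in `y`,
the first term is at most `Ginf ‖u‖²` in absolute value. By `2 |u(x) u(y)| ≤ u(x)² + u(y)²` and
symmetry once more, the cross term is at most `sup_x ∫ |K x ·| ‖u‖² ≤ ‖g(|·|)‖₁ ‖u‖²`. Hence
`|a_g(u,u)| ≤ 2 (‖g(|·|)‖₁ + Ginf) ‖u‖² ≤ 2 (‖g(|·|)‖₁ + Ginf) κ a_ρ(u,u)`, and the smallness of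
`|lam|` lets `a_ρ` absorb the perturbation.
-/

open MeasureTheory

theorem abs_integral_mul_le_of_abs_le {α : Type*} [MeasurableSpace α] {μ : Measure α}
    {f G : α → ℝ} {B : ℝ} (hf : Integrable f μ) (hf0 : 0 ≤ᵐ[μ] f) (hG : ∀ᵐ x ∂μ, |G x| ≤ B) :
    |∫ x, f x * G x ∂μ| ≤ B * ∫ x, f x ∂μ := by
  rw [← integral_const_mul B f, ← Real.norm_eq_abs]
  refine norm_integral_le_of_norm_le (hf.const_mul B) ?_
  filter_upwards [hf0, hG] with x hfx hGx
  rw [Real.norm_eq_abs, abs_mul, abs_of_nonneg hfx, mul_comm]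
  exact mul_le_mul_of_nonneg_right hGx hfx

theorem norm_mul_mul_le_add_sq_div_two_mul_abs (a b k : ℝ) :
    ‖a * b * k‖ ≤ (a ^ 2 + b ^ 2) / 2 * |k| := by
  rw [Real.norm_eq_abs, abs_mul, abs_mul]
  gcongr
  nlinarith [two_mul_le_add_sq |a| |b|, sq_abs a, sq_abs b]

section SymmetricKernel

variable {α : Type*} [MeasurableSpace α] {μ : Measure α} [SFinite μ] {K : α → α → ℝ}
  {u : α → ℝ} {B C : ℝ}

theorem integral_comp_snd_mul_eq_of_symm (hK : ∀ x y, K x y = K y x) (φ : α → ℝ) :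
    ∫ p : α × α, φ p.2 * K p.1 p.2 ∂μ.prod μ = ∫ p : α × α, φ p.1 * K p.1 p.2 ∂μ.prod μ := by
  rw [← integral_prod_swap]
  simp only [Prod.fst_swap, Prod.snd_swap]
  congr 1
  ext p
  rw [hK]

theorem integrable_comp_snd_mul_of_symm (hK : ∀ x y, K x y = K y x) (φ : α → ℝ)
    (h : Integrable (fun p : α × α => φ p.1 * K p.1 p.2) (μ.prod μ)) :
    Integrable (fun p : α × α => φ p.2 * K p.1 p.2) (μ.prod μ) := by
  convert h.swap using 2 with p
  simp [hK p.1 p.2]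

theorem integrable_sq_mul_kernel (hK_meas : AEStronglyMeasurable (Function.uncurry K) (μ.prod μ))
    (hK_int : ∀ᵐ x ∂μ, Integrable (K x) μ) (hK_L1 : ∀ᵐ x ∂μ, ∫ y, |K x y| ∂μ ≤ C)
    (hu : MemLp u 2 μ) :
    Integrable (fun p : α × α => u p.1 ^ 2 * K p.1 p.2) (μ.prod μ) := by
  have hmeas : AEStronglyMeasurable (fun p : α × α => u p.1 ^ 2 * K p.1 p.2) (μ.prod μ) :=
    (hu.aestronglyMeasurable.pow 2).comp_fst.mul hK_meas
  refine (integrable_prod_iff hmeas).2 ⟨?_, ?_⟩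
  · filter_upwards [hK_int] with x hx using hx.const_mul _
  · refine (hu.integrable_sq.mul_const C).mono' hmeas.norm.integral_prod_right' ?_
    filter_upwards [hK_L1] with x hx
    have h : ∫ y, ‖u x ^ 2 * K x y‖ ∂μ = u x ^ 2 * ∫ y, |K x y| ∂μ := by
      simp only [norm_mul, norm_pow, Real.norm_eq_abs, sq_abs, integral_const_mul]
    rw [h, Real.norm_of_nonneg (by positivity)]
    exact mul_le_mul_of_nonneg_left hx (sq_nonneg _)

theorem abs_integral_sq_mul_kernel_le (hK : ∀ᵐ x ∂μ, |∫ y, K x y ∂μ| ≤ B)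
    (hK_int : Integrable (fun p : α × α => u p.1 ^ 2 * K p.1 p.2) (μ.prod μ))
    (hu : Integrable (fun x => u x ^ 2) μ) :
    |∫ p : α × α, u p.1 ^ 2 * K p.1 p.2 ∂μ.prod μ| ≤ B * ∫ x, u x ^ 2 ∂μ := by
  rw [integral_prod _ hK_int]
  simp only [integral_const_mul]
  exact abs_integral_mul_le_of_abs_le hu (ae_of_all _ fun x => sq_nonneg _) hK

theorem integrable_add_div_two_mul_of_symm (hK : ∀ x y, K x y = K y x) (φ : α → ℝ)
    (h : Integrable (fun p : α × α => φ p.1 * K p.1 p.2) (μ.prod μ)) :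
    Integrable (fun p : α × α => (φ p.1 + φ p.2) / 2 * K p.1 p.2) (μ.prod μ) := by
  refine ((h.add (integrable_comp_snd_mul_of_symm hK φ h)).div_const 2).congr
    (ae_of_all _ fun p => ?_)
  simp only [Pi.add_apply]
  ring

theorem integral_add_div_two_mul_eq_of_symm (hK : ∀ x y, K x y = K y x) (φ : α → ℝ)
    (h : Integrable (fun p : α × α => φ p.1 * K p.1 p.2) (μ.prod μ)) :
    ∫ p : α × α, (φ p.1 + φ p.2) / 2 * K p.1 p.2 ∂μ.prod μ
      = ∫ p : α × α, φ p.1 * K p.1 p.2 ∂μ.prod μ := by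
  calc _ = ((∫ p : α × α, φ p.1 * K p.1 p.2 ∂μ.prod μ)
        + ∫ p : α × α, φ p.2 * K p.1 p.2 ∂μ.prod μ) / 2 := by
        rw [← integral_add h (integrable_comp_snd_mul_of_symm hK φ h), ← integral_div]
        congr 1
        ext p
        ring
    _ = _ := by
        rw [integral_comp_snd_mul_eq_of_symm hK φ]
        ring

theorem integrable_sq_mul_abs_kernel
    (hK_meas : AEStronglyMeasurable (Function.uncurry K) (μ.prod μ))
    (hK_int : ∀ᵐ x ∂μ, Integrable (K x) μ) (hK_L1 : ∀ᵐ x ∂μ, ∫ y, |K x y| ∂μ ≤ C)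
    (hu : MemLp u 2 μ) :
    Integrable (fun p : α × α => u p.1 ^ 2 * |K p.1 p.2|) (μ.prod μ) := by
  simpa only [abs_mul, abs_pow, sq_abs] using
    (integrable_sq_mul_kernel hK_meas hK_int hK_L1 hu).abs

theorem integrable_mul_mul_kernel (hK_symm : ∀ x y, K x y = K y x)
    (hK_meas : AEStronglyMeasurable (Function.uncurry K) (μ.prod μ))
    (hK_int : ∀ᵐ x ∂μ, Integrable (K x) μ) (hK_L1 : ∀ᵐ x ∂μ, ∫ y, |K x y| ∂μ ≤ C)
    (hu : MemLp u 2 μ) :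
    Integrable (fun p : α × α => u p.1 * u p.2 * K p.1 p.2) (μ.prod μ) := by
  have habs_symm : ∀ x y, |K x y| = |K y x| := fun x y => by rw [hK_symm]
  exact (integrable_add_div_two_mul_of_symm habs_symm (fun x => u x ^ 2)
    (integrable_sq_mul_abs_kernel hK_meas hK_int hK_L1 hu)).mono'
    ((hu.aestronglyMeasurable.comp_fst.mul hu.aestronglyMeasurable.comp_snd).mul hK_meas)
    (ae_of_all _ fun _ => norm_mul_mul_le_add_sq_div_two_mul_abs _ _ _)

theorem integral_kernel_mul_sq_sub_eq (hK_symm : ∀ x y, K x y = K y x)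
    (hK_meas : AEStronglyMeasurable (Function.uncurry K) (μ.prod μ))
    (hK_int : ∀ᵐ x ∂μ, Integrable (K x) μ) (hK_L1 : ∀ᵐ x ∂μ, ∫ y, |K x y| ∂μ ≤ C)
    (hu : MemLp u 2 μ) :
    ∫ x, ∫ y, K x y * (u y - u x) ^ 2 ∂μ ∂μ
      = 2 * ∫ p : α × α, u p.1 ^ 2 * K p.1 p.2 ∂μ.prod μ
        - 2 * ∫ p : α × α, u p.1 * u p.2 * K p.1 p.2 ∂μ.prod μ := by
  have hdiag := integrable_sq_mul_kernel hK_meas hK_int hK_L1 hu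
  have hdiag' := integrable_comp_snd_mul_of_symm hK_symm (fun x => u x ^ 2) hdiag
  have hcross := integrable_mul_mul_kernel hK_symm hK_meas hK_int hK_L1 hu
  have hexpand : (fun p : α × α => K p.1 p.2 * (u p.2 - u p.1) ^ 2) = fun p =>
      u p.1 ^ 2 * K p.1 p.2 + u p.2 ^ 2 * K p.1 p.2 - 2 * (u p.1 * u p.2 * K p.1 p.2) := by
    ext p
    ring
  have hint : Integrable (fun p : α × α => K p.1 p.2 * (u p.2 - u p.1) ^ 2) (μ.prod μ) := by
    rw [hexpand]
    exact (hdiag.add hdiag').sub (hcross.const_mul 2)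
  rw [← integral_prod _ hint, hexpand, integral_sub ?_ (hcross.const_mul 2),
    integral_add hdiag hdiag', integral_const_mul,
    integral_comp_snd_mul_eq_of_symm hK_symm (fun x => u x ^ 2)]
  · ring
  · exact hdiag.add hdiag'

theorem abs_integral_mul_mul_kernel_le (hK_symm : ∀ x y, K x y = K y x)
    (hK_meas : AEStronglyMeasurable (Function.uncurry K) (μ.prod μ))
    (hK_int : ∀ᵐ x ∂μ, Integrable (K x) μ) (hK_L1 : ∀ᵐ x ∂μ, ∫ y, |K x y| ∂μ ≤ C)
    (hu : MemLp u 2 μ) :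
    |∫ p : α × α, u p.1 * u p.2 * K p.1 p.2 ∂μ.prod μ| ≤ C * ∫ x, u x ^ 2 ∂μ := by
  have habs_symm : ∀ x y, |K x y| = |K y x| := fun x y => by rw [hK_symm]
  have hdiag_abs := integrable_sq_mul_abs_kernel hK_meas hK_int hK_L1 hu
  have habs_mean : ∀ᵐ x ∂μ, |∫ y, |K x y| ∂μ| ≤ C := by
    filter_upwards [hK_L1] with x hx
    rwa [abs_of_nonneg (integral_nonneg fun y => abs_nonneg _)]
  calc |∫ p : α × α, u p.1 * u p.2 * K p.1 p.2 ∂μ.prod μ|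
      ≤ ∫ p : α × α, (u p.1 ^ 2 + u p.2 ^ 2) / 2 * |K p.1 p.2| ∂μ.prod μ :=
        norm_integral_le_of_norm_le
          (integrable_add_div_two_mul_of_symm habs_symm (fun x => u x ^ 2) hdiag_abs)
          (ae_of_all _ fun _ => norm_mul_mul_le_add_sq_div_two_mul_abs _ _ _)
    _ = ∫ p : α × α, u p.1 ^ 2 * |K p.1 p.2| ∂μ.prod μ :=
        integral_add_div_two_mul_eq_of_symm habs_symm (fun x => u x ^ 2) hdiag_abs
    _ ≤ C * ∫ x, u x ^ 2 ∂μ :=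
        (le_abs_self _).trans (abs_integral_sq_mul_kernel_le habs_mean hdiag_abs hu.integrable_sq)

theorem abs_integral_kernel_mul_sq_sub_le (hK_symm : ∀ x y, K x y = K y x)
    (hK_meas : AEStronglyMeasurable (Function.uncurry K) (μ.prod μ))
    (hK_int : ∀ᵐ x ∂μ, Integrable (K x) μ) (hK_L1 : ∀ᵐ x ∂μ, ∫ y, |K x y| ∂μ ≤ C)
    (hK_mean : ∀ᵐ x ∂μ, |∫ y, K x y ∂μ| ≤ B) (hu : MemLp u 2 μ) :
    |∫ x, ∫ y, K x y * (u y - u x) ^ 2 ∂μ ∂μ| ≤ 2 * (C + B) * ∫ x, u x ^ 2 ∂μ := by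
  have hdiag_le := abs_integral_sq_mul_kernel_le hK_mean
    (integrable_sq_mul_kernel hK_meas hK_int hK_L1 hu) hu.integrable_sq
  have hcross_le := abs_integral_mul_mul_kernel_le hK_symm hK_meas hK_int hK_L1 hu
  rw [integral_kernel_mul_sq_sub_eq hK_symm hK_meas hK_int hK_L1 hu]
  refine (abs_sub _ _).trans ?_
  rw [abs_mul, abs_mul, abs_two]
  linarith

end SymmetricKernel

section RadialKernel

variable {E : Type*} [NormedAddCommGroup E] [MeasurableSpace E] [BorelSpace E]
  {μ : Measure E} [μ.IsAddRightInvariant] {g : ℝ → ℝ}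

theorem setIntegral_abs_comp_norm_sub_le (hg : Integrable (fun ξ => g ‖ξ‖) μ) (s : Set E)
    (x : E) : ∫ y in s, |g ‖y - x‖| ∂μ ≤ ∫ ξ, |g ‖ξ‖| ∂μ :=
  (setIntegral_le_integral (hg.abs.comp_sub_right x) (ae_of_all _ fun _ => abs_nonneg _)).trans_eq
    (integral_sub_right_eq_self (fun ξ => |g ‖ξ‖|) x)

theorem abs_setIntegral_radial_energy_le [SecondCountableTopology E] [SFinite μ] {s : Set E}
    (hs : MeasurableSet s) {u : E → ℝ} {B : ℝ} (hg_meas : Measurable g) (hg : Integrable (fun ξ => g ‖ξ‖) μ)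
    (hB : ∀ x ∈ s, |∫ y in s, g ‖y - x‖ ∂μ| ≤ B) (hu : MemLp u 2 (μ.restrict s)) :
    |∫ x in s, ∫ y in s, g ‖y - x‖ * (u y - u x) ^ 2 ∂μ ∂μ|
      ≤ 2 * ((∫ ξ, |g ‖ξ‖| ∂μ) + B) * ∫ x in s, u x ^ 2 ∂μ :=
  abs_integral_kernel_mul_sq_sub_le (fun x y => by rw [norm_sub_rev])
    (hg_meas.comp (measurable_snd.sub measurable_fst).norm).aestronglyMeasurable
    (ae_of_all _ fun x => (hg.comp_sub_right x).integrableOn)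
    (ae_of_all _ fun x => setIntegral_abs_comp_norm_sub_le hg s x)
    ((ae_restrict_mem hs).mono hB) hu

end RadialKernel

theorem one_sub_mul_le_add_mul_of_abs_le {a b S κ lam : ℝ} (ha : 0 ≤ a)
    (hb : |b| ≤ 2 * S * κ * a) (hlam : |lam| < (2 * κ * S)⁻¹) :
    (1 - 2 * |lam| * κ * S) * a ≤ a + lam * b ∧ 0 ≤ (1 - 2 * |lam| * κ * S) * a := by
  have hpos : 0 < 2 * κ * S := inv_pos.mp ((abs_nonneg lam).trans_lt hlam)
  have hsmall : 2 * κ * S * |lam| < 1 := (lt_inv_mul_iff₀ hpos).mp (by rwa [mul_one])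
  have hlamb : |lam * b| ≤ 2 * |lam| * κ * S * a := by
    rw [abs_mul]
    calc |lam| * |b| ≤ |lam| * (2 * S * κ * a) := by gcongr
      _ = 2 * |lam| * κ * S * a := by ring
  constructor
  · linarith [neg_abs_le (lam * b)]
  · exact mul_nonneg (by linarith) ha

theorem sign_changing_coercivity_general
    {d : ℕ} (Ω Ωhat : Set (EuclideanSpace ℝ (Fin d)))
    (hsub : Ω ⊆ Ωhat) (hΩhat : MeasurableSet Ωhat)
    (ρ g : ℝ → ℝ) (hρ0 : ∀ r, 0 ≤ ρ r)
    (hgmeas : Measurable g)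
    (hgL1 : Integrable (fun ξ : EuclideanSpace ℝ (Fin d) => g ‖ξ‖))
    (Ginf : ℝ) (hGinf0 : 0 ≤ Ginf)
    (hGinf : ∀ x ∈ Ωhat, |∫ y in Ωhat, g ‖y - x‖| ≤ Ginf)
    (κ lam : ℝ)
    (hlam : |lam| < (2 * κ * ((∫ ξ : EuclideanSpace ℝ (Fin d), |g ‖ξ‖|) + Ginf))⁻¹)
    (V : Set (EuclideanSpace ℝ (Fin d) → ℝ))
    (hV : ∀ u ∈ V, (∀ x ∈ Ωhat \ Ω, u x = 0) ∧
      MemLp u 2 (volume.restrict Ωhat) ∧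
      IntegrableOn (fun p : EuclideanSpace ℝ (Fin d) × EuclideanSpace ℝ (Fin d) =>
        ρ ‖p.2 - p.1‖ * (u p.2 - u p.1) ^ 2) (Ωhat ×ˢ Ωhat) ∧
      IntegrableOn (fun p : EuclideanSpace ℝ (Fin d) × EuclideanSpace ℝ (Fin d) =>
        g ‖p.2 - p.1‖ * (u p.2 - u p.1) ^ 2) (Ωhat ×ˢ Ωhat) ∧
      (∫ x in Ω, (u x) ^ 2)
        ≤ κ * ∫ x in Ωhat, ∫ y in Ωhat, ρ ‖y - x‖ * (u y - u x) ^ 2) :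
    ∀ u ∈ V,
      (1 - 2 * |lam| * κ * ((∫ ξ : EuclideanSpace ℝ (Fin d), |g ‖ξ‖|) + Ginf))
          * ∫ x in Ωhat, ∫ y in Ωhat, ρ ‖y - x‖ * (u y - u x) ^ 2
        ≤ (∫ x in Ωhat, ∫ y in Ωhat, ρ ‖y - x‖ * (u y - u x) ^ 2)
          + lam * ∫ x in Ωhat, ∫ y in Ωhat, g ‖y - x‖ * (u y - u x) ^ 2 ∧
      0 ≤ (1 - 2 * |lam| * κ * ((∫ ξ : EuclideanSpace ℝ (Fin d), |g ‖ξ‖|) + Ginf))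
          * ∫ x in Ωhat, ∫ y in Ωhat, ρ ‖y - x‖ * (u y - u x) ^ 2 := by
  intro u hu
  obtain ⟨hzero, hL2, -, -, hpoin⟩ := hV u hu
  have hS : 0 ≤ (∫ ξ : EuclideanSpace ℝ (Fin d), |g ‖ξ‖|) + Ginf :=
    add_nonneg (integral_nonneg fun _ => abs_nonneg _) hGinf0
  have hnorm : ∫ x in Ωhat, u x ^ 2 ≤ κ * ∫ x in Ωhat, ∫ y in Ωhat, ρ ‖y - x‖ * (u y - u x) ^ 2 :=
    (setIntegral_eq_of_subset_of_forall_sdiff_eq_zero hΩhat hsub fun x hx => by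
      rw [hzero x hx, sq, mul_zero]).trans_le hpoin
  refine one_sub_mul_le_add_mul_of_abs_le
    (integral_nonneg fun x => integral_nonneg fun y => mul_nonneg (hρ0 _) (sq_nonneg _)) ?_ hlam
  calc _ ≤ 2 * ((∫ ξ : EuclideanSpace ℝ (Fin d), |g ‖ξ‖|) + Ginf) * ∫ x in Ωhat, u x ^ 2 :=
        abs_setIntegral_radial_energy_le hΩhat hgmeas hgL1 hGinf hL2
    _ ≤ _ := by
        rw [mul_assoc _ κ]
        exact mul_le_mul_of_nonneg_left hnorm (by positivity)

/-- Mengesha–Du coercivity estimate for sign-changing kernels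
`K = 2ρ + 2lam g`: under the smallness condition on `|lam|`, the perturbed
nonlocal energy remains bounded below by a positive multiple of the
unperturbed energy, hence nonnegative. -/
theorem sign_changing_coercivity
    {d : ℕ} (Ω Ωhat : Set (EuclideanSpace ℝ (Fin d)))
    (hsub : Ω ⊆ Ωhat) (hΩ : MeasurableSet Ω) (hΩhat : MeasurableSet Ωhat)
    (ρ g : ℝ → ℝ) (hρmeas : Measurable ρ) (hρ0 : ∀ r, 0 ≤ ρ r)
    (hgmeas : Measurable g)
    (hgL1 : Integrable (fun ξ : EuclideanSpace ℝ (Fin d) => g ‖ξ‖))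
    (Ginf : ℝ) (hGinf0 : 0 ≤ Ginf)
    (hGinf : ∀ x ∈ Ωhat, |∫ y in Ωhat, g ‖y - x‖| ≤ Ginf)
    (κ lam : ℝ) (hκ : 0 < κ)
    (hlam : |lam| < (2 * κ * ((∫ ξ : EuclideanSpace ℝ (Fin d), |g ‖ξ‖|) + Ginf))⁻¹)
    (V : Set (EuclideanSpace ℝ (Fin d) → ℝ))
    (hV : ∀ u ∈ V, (∀ x ∈ Ωhat \ Ω, u x = 0) ∧
      MemLp u 2 (volume.restrict Ωhat) ∧
      IntegrableOn (fun p : EuclideanSpace ℝ (Fin d) × EuclideanSpace ℝ (Fin d) =>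
        ρ ‖p.2 - p.1‖ * (u p.2 - u p.1) ^ 2) (Ωhat ×ˢ Ωhat) ∧
      IntegrableOn (fun p : EuclideanSpace ℝ (Fin d) × EuclideanSpace ℝ (Fin d) =>
        g ‖p.2 - p.1‖ * (u p.2 - u p.1) ^ 2) (Ωhat ×ˢ Ωhat) ∧
      (∫ x in Ω, (u x) ^ 2)
        ≤ κ * ∫ x in Ωhat, ∫ y in Ωhat, ρ ‖y - x‖ * (u y - u x) ^ 2) :
    ∀ u ∈ V,
      (1 - 2 * |lam| * κ * ((∫ ξ : EuclideanSpace ℝ (Fin d), |g ‖ξ‖|) + Ginf))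
          * ∫ x in Ωhat, ∫ y in Ωhat, ρ ‖y - x‖ * (u y - u x) ^ 2
        ≤ (∫ x in Ωhat, ∫ y in Ωhat, ρ ‖y - x‖ * (u y - u x) ^ 2)
          + lam * ∫ x in Ωhat, ∫ y in Ωhat, g ‖y - x‖ * (u y - u x) ^ 2 ∧
      0 ≤ (1 - 2 * |lam| * κ * ((∫ ξ : EuclideanSpace ℝ (Fin d), |g ‖ξ‖|) + Ginf))
          * ∫ x in Ωhat, ∫ y in Ωhat, ρ ‖y - x‖ * (u y - u x) ^ 2 :=
  sign_changing_coercivity_general Ω Ωhat hsub hΩhat ρ g hρ0 hgmeas hgL1 Ginf hGinf0 hGinf κ lam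
    hlam V hV
end

section
/- Let $\Omega = (0, |\Omega|) \subset \mathbb{R}$ and let $u \in L^2$ be defined on $\widehat\Omega = \Omega \cup \Omega_I$ with $u = 0$ on $\Omega_I$, where $\Omega_I$ is the $\delta$-collar of $\Omega$. Suppose $\rho \geq 0$ is a kernel with $\rho(|z|) \geq \rho_0 > 0$ for $|z| \leq \sigma$, for some $0 < \sigma \leq \delta$. Then there exists a constant $\kappa > 0$ depending only on $\rho_0$, $\sigma$, and $|\Omega|$ such that $\|u\|_{L^2(\Omega)}^2 \leq \kappa \int_{\widehat\Omega}\int_{\widehat\Omega} \rho(|y-x|)(u(y)-u(x))^2\,dy\,dx$. -/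
/-!
A function `v` on `ℝ` supported in `(0, len)` is controlled by its shift differences: for
`z ≥ len / N`, the chain `x, x + z, …, x + N z` leaves the support, so telescoping and
Cauchy–Schwarz give `‖v‖² ≤ N² ∫ (v (x + z) - v x)² dx`. Averaging over `z ∈ (σ/2, σ]` and
bounding the kernel below by `ρ₀` on `(0, σ]` turns the right-hand side into a part of the
nonlocal energy; the collar of width `δ ≥ σ` contains every pair `x < y ≤ x + σ` that touches
`(0, len)`, so nothing is lost by restricting the energy to `Ω̂ × Ω̂`.
-/

open MeasureTheory Set Finset
open scoped ENNReal

noncomputable section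

def shiftEnergy (v : ℝ → ℝ) (z : ℝ) : ℝ≥0∞ :=
  ∫⁻ x, ENNReal.ofReal ((v (x + z) - v x) ^ 2)

def nonlocalEnergy (ρ v : ℝ → ℝ) (s : Set ℝ) : ℝ≥0∞ :=
  ∫⁻ x in s, ∫⁻ y in s, ENNReal.ofReal (ρ |y - x| * (v y - v x) ^ 2)

theorem nonlocalEnergy_congr_ae {ρ u v : ℝ → ℝ} {s : Set ℝ} (huv : u =ᵐ[volume.restrict s] v) :
    nonlocalEnergy ρ u s = nonlocalEnergy ρ v s := by
  refine lintegral_congr_ae ?_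
  filter_upwards [huv] with x hx
  refine lintegral_congr_ae ?_
  filter_upwards [huv] with y hy
  rw [hx, hy]

theorem sq_le_mul_sum_sq_sub_of_eq_zero {g : ℕ → ℝ} {N : ℕ} (hN : g N = 0) :
    g 0 ^ 2 ≤ N * ∑ k ∈ range N, (g (k + 1) - g k) ^ 2 := by
  have := sq_sum_le_card_mul_sum_sq (s := range N) (f := fun k => g (k + 1) - g k)
  rwa [Finset.sum_range_sub, hN, zero_sub, neg_sq, card_range] at this

theorem setLIntegral_le_of_le_on_inter {α : Type*} [MeasurableSpace α] {μ : Measure α}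
    {s t : Set α} {f g : α → ℝ≥0∞} (hs : MeasurableSet s) (ht : MeasurableSet t)
    (hle : ∀ x ∈ s ∩ t, f x ≤ g x) (hzero : ∀ x ∈ s \ t, f x = 0) :
    ∫⁻ x in s, f x ∂μ ≤ ∫⁻ x in t, g x ∂μ := by
  rw [← lintegral_inter_add_sdiff f s ht, setLIntegral_congr_fun (hs.diff ht) hzero,
    lintegral_zero, add_zero]
  exact (setLIntegral_mono' (hs.inter ht) hle).trans (lintegral_mono_set inter_subset_right)

theorem setLIntegral_Ioc_comp_const_add (f : ℝ → ℝ≥0∞) (x a b : ℝ) :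
    ∫⁻ z in Ioc a b, f (x + z) = ∫⁻ y in Ioc (x + a) (x + b), f y := by
  have := (measurePreserving_add_left volume x).setLIntegral_comp_preimage_emb
    (measurableEmbedding_addLeft x) f (Ioc (x + a) (x + b))
  rwa [preimage_const_add_Ioc, add_sub_cancel_left, add_sub_cancel_left] at this

theorem exists_measurable_ae_eq_restrict_of_eq_zero_on_diff {α β : Type*} [MeasurableSpace α]
    [MeasurableSpace β] [Zero β] {μ : Measure α} {s t : Set α} (hs : MeasurableSet s)
    (ht : MeasurableSet t) (hst : s ⊆ t) {u : α → β} (hu : AEMeasurable u (μ.restrict t))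
    (hu0 : ∀ x ∈ t \ s, u x = 0) :
    ∃ v : α → β, Measurable v ∧ (∀ x ∉ s, v x = 0) ∧ u =ᵐ[μ.restrict t] v := by
  obtain ⟨w, hw, huw⟩ := hu
  refine ⟨s.indicator w, hw.indicator hs, fun x hx => indicator_of_notMem hx _, ?_⟩
  rw [Filter.EventuallyEq, ← union_sdiff_cancel hst, ae_restrict_union_iff]
  constructor
  · filter_upwards [ae_restrict_of_ae_restrict_of_subset hst huw,
      indicator_ae_eq_restrict (f := w) hs] with x huwx hind
    rw [huwx, hind]
  · filter_upwards [ae_restrict_mem (ht.diff hs)] with x hx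
    rw [hu0 x hx, indicator_of_notMem hx.2]

section ShiftEnergy

variable {v : ℝ → ℝ} {a b : ℝ}

theorem lintegral_sq_le_shiftEnergy (hv : Measurable v) (hv0 : ∀ x ∉ Ioo a b, v x = 0)
    {z : ℝ} {N : ℕ} (hN : b - a ≤ N * z) :
    ∫⁻ x, ENNReal.ofReal (v x ^ 2) ≤ N ^ 2 * shiftEnergy v z := by
  set step : ℕ → ℝ → ℝ≥0∞ := fun k x =>
    ENNReal.ofReal ((v (x + ↑(k + 1) * z) - v (x + k * z)) ^ 2)
  have hchain : ∀ x, ENNReal.ofReal (v x ^ 2) ≤ N * ∑ k ∈ range N, step k x := by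
    intro x
    rw [← ENNReal.ofReal_natCast, ← ENNReal.ofReal_sum_of_nonneg fun _ _ => sq_nonneg _,
      ← ENNReal.ofReal_mul (Nat.cast_nonneg N)]
    refine ENNReal.ofReal_le_ofReal ?_
    by_cases hx : x ∈ Ioo a b
    · have hend : v (x + N * z) = 0 := hv0 _ fun h => by linarith [hx.1, h.2]
      simpa using sq_le_mul_sum_sq_sub_of_eq_zero (g := fun k : ℕ => v (x + k * z)) hend
    · rw [hv0 x hx, zero_pow two_ne_zero]
      positivity
  have hstep : ∀ k, ∫⁻ x, step k x = shiftEnergy v z := by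
    intro k
    simp_rw [step, show ∀ x : ℝ, x + ↑(k + 1) * z = x + k * z + z from fun x => by
      push_cast; ring]
    exact lintegral_add_right_eq_self (fun y => ENNReal.ofReal ((v (y + z) - v y) ^ 2)) (k * z)
  have hstep_meas : ∀ k, Measurable (step k) := fun k => by fun_prop
  calc ∫⁻ x, ENNReal.ofReal (v x ^ 2)
      ≤ ∫⁻ x, N * ∑ k ∈ range N, step k x := lintegral_mono hchain
    _ = N * ∑ k ∈ range N, shiftEnergy v z := by
      rw [lintegral_const_mul' _ _ (ENNReal.natCast_ne_top N),
        lintegral_finsetSum _ fun k _ => hstep_meas k]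
      simp_rw [hstep]
    _ = N ^ 2 * shiftEnergy v z := by
      rw [Finset.sum_const, card_range, nsmul_eq_mul, sq, mul_assoc]

theorem ofReal_sub_mul_lintegral_sq_le (hv : Measurable v) (hv0 : ∀ x ∉ Ioo a b, v x = 0)
    {s t : ℝ} {N : ℕ} (hN : b - a ≤ N * s) :
    ENNReal.ofReal (t - s) * ∫⁻ x, ENNReal.ofReal (v x ^ 2)
      ≤ N ^ 2 * ∫⁻ z in Ioc s t, shiftEnergy v z := by
  calc ENNReal.ofReal (t - s) * ∫⁻ x, ENNReal.ofReal (v x ^ 2)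
      = ∫⁻ _ in Ioc s t, ∫⁻ x, ENNReal.ofReal (v x ^ 2) := by
        rw [setLIntegral_const, Real.volume_Ioc, mul_comm]
    _ ≤ ∫⁻ z in Ioc s t, N ^ 2 * shiftEnergy v z :=
        setLIntegral_mono' measurableSet_Ioc fun z hz =>
          lintegral_sq_le_shiftEnergy hv hv0 (hN.trans (by gcongr; exact hz.1.le))
    _ = N ^ 2 * ∫⁻ z in Ioc s t, shiftEnergy v z := lintegral_const_mul' _ _ (by simp)

end ShiftEnergy

section Collar

variable {len σ δ : ℝ}

theorem mem_collar_of_mem_Ioo_of_near (hσδ : σ ≤ δ) {x y : ℝ} (hxy : x < y) (hyx : y ≤ x + σ)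
    (h : x ∈ Ioo 0 len ∨ y ∈ Ioo 0 len) :
    x ∈ Icc (-δ) (len + δ) ∧ y ∈ Icc (-δ) (len + δ) := by
  rcases h with ⟨h0, hlen⟩ | ⟨h0, hlen⟩ <;>
    exact ⟨⟨by linarith, by linarith⟩, ⟨by linarith, by linarith⟩⟩

theorem ofReal_mul_setLIntegral_shiftEnergy_le {v ρ : ℝ → ℝ} {ρ₀ : ℝ} (hv : Measurable v)
    (hv0 : ∀ x ∉ Ioo 0 len, v x = 0) (hσδ : σ ≤ δ) (hρ₀ : 0 ≤ ρ₀)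
    (hρlow : ∀ r ∈ Ioc 0 σ, ρ₀ ≤ ρ r) :
    ENNReal.ofReal ρ₀ * ∫⁻ z in Ioc 0 σ, shiftEnergy v z
      ≤ nonlocalEnergy ρ v (Icc (-δ) (len + δ)) := by
  set Q := Icc (-δ) (len + δ)
  set F : ℝ → ℝ → ℝ≥0∞ := fun x y => ENNReal.ofReal (ρ₀ * (v y - v x) ^ 2)
  have hfar : ∀ x y, x < y → y ≤ x + σ → ¬(x ∈ Q ∧ y ∈ Q) → F x y = 0 := by
    intro x y hxy hyx hQ
    obtain ⟨hx, hy⟩ := not_or.1 (mt (mem_collar_of_mem_Ioo_of_near hσδ hxy hyx) hQ)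
    simp [F, hv0 x hx, hv0 y hy]
  have hF : Measurable (Function.uncurry fun z x => F x (x + z)) := by fun_prop
  calc ENNReal.ofReal ρ₀ * ∫⁻ z in Ioc 0 σ, shiftEnergy v z
      = ∫⁻ z in Ioc 0 σ, ∫⁻ x, F x (x + z) := by
        rw [← lintegral_const_mul' _ _ ENNReal.ofReal_ne_top]
        refine lintegral_congr fun z => ?_
        rw [shiftEnergy, ← lintegral_const_mul' _ _ ENNReal.ofReal_ne_top]
        simp_rw [F, ENNReal.ofReal_mul hρ₀]
    _ = ∫⁻ x, ∫⁻ y in Ioc x (x + σ), F x y := by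
        rw [lintegral_lintegral_swap (f := fun z x => F x (x + z)) hF.aemeasurable]
        simp_rw [setLIntegral_Ioc_comp_const_add (F _), add_zero]
    _ = ∫⁻ x in Q, ∫⁻ y in Ioc x (x + σ), F x y := by
        refine (setLIntegral_eq_of_support_subset fun x hx => ?_).symm
        by_contra hxQ
        refine hx ((setLIntegral_congr_fun measurableSet_Ioc fun y hy => ?_).trans lintegral_zero)
        exact hfar x y hy.1 hy.2 fun h => hxQ h.1
    _ ≤ nonlocalEnergy ρ v Q := by
        refine setLIntegral_mono' measurableSet_Icc fun x _ =>
          setLIntegral_le_of_le_on_inter measurableSet_Ioc measurableSet_Icc ?_ ?_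
        · rintro y ⟨⟨hxy, hyx⟩, -⟩
          refine ENNReal.ofReal_le_ofReal (mul_le_mul_of_nonneg_right ?_ (sq_nonneg _))
          exact hρlow _ ⟨abs_pos.2 (sub_ne_zero.2 hxy.ne'), by
            rw [abs_of_pos (sub_pos.2 hxy)]; linarith⟩
        · rintro y ⟨⟨hxy, hyx⟩, hyQ⟩
          exact hfar x y hxy hyx fun h => hyQ h.2

theorem lintegral_sq_le_mul_nonlocalEnergy {v ρ : ℝ → ℝ} {ρ₀ : ℝ} (hv : Measurable v)
    (hv0 : ∀ x ∉ Ioo 0 len, v x = 0) (hσ : 0 < σ) (hσδ : σ ≤ δ) (hρ₀ : 0 < ρ₀)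
    (hρlow : ∀ r ∈ Ioc 0 σ, ρ₀ ≤ ρ r) :
    ∫⁻ x, ENNReal.ofReal (v x ^ 2)
      ≤ ENNReal.ofReal (2 * (⌈2 * len / σ⌉₊ : ℝ) ^ 2 / (σ * ρ₀))
        * nonlocalEnergy ρ v (Icc (-δ) (len + δ)) := by
  set N := ⌈2 * len / σ⌉₊
  have hN : len - 0 ≤ N * (σ / 2) := by
    have := Nat.le_ceil (2 * len / σ)
    rw [sub_zero, ← div_le_iff₀ (by positivity)]
    convert this using 1
    field_simp
  have hchain := ofReal_sub_mul_lintegral_sq_le hv hv0 (t := σ) hN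
  rw [sub_half] at hchain
  have hkernel := ofReal_mul_setLIntegral_shiftEnergy_le hv hv0 hσδ hρ₀.le hρlow
  have hc : ENNReal.ofReal (ρ₀ * (σ / 2)) ≠ 0 := by
    rw [Ne, ENNReal.ofReal_eq_zero, not_le]; positivity
  -- multiplying by `ρ₀ σ / 2` turns the constant into `N²`
  rw [← ENNReal.mul_le_mul_iff_right hc ENNReal.ofReal_ne_top, ← mul_assoc,
    ← ENNReal.ofReal_mul (by positivity),
    show ρ₀ * (σ / 2) * (2 * (N : ℝ) ^ 2 / (σ * ρ₀)) = N ^ 2 by field_simp,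
    ENNReal.ofReal_pow (Nat.cast_nonneg N), ENNReal.ofReal_natCast,
    ENNReal.ofReal_mul hρ₀.le, mul_assoc]
  calc ENNReal.ofReal ρ₀ * (ENNReal.ofReal (σ / 2) * ∫⁻ x, ENNReal.ofReal (v x ^ 2))
      ≤ ENNReal.ofReal ρ₀ * (N ^ 2 * ∫⁻ z in Ioc 0 σ, shiftEnergy v z) := by
        gcongr ENNReal.ofReal ρ₀ * ?_
        exact hchain.trans (by gcongr; positivity)
    _ = N ^ 2 * (ENNReal.ofReal ρ₀ * ∫⁻ z in Ioc 0 σ, shiftEnergy v z) := by ring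
    _ ≤ N ^ 2 * nonlocalEnergy ρ v (Icc (-δ) (len + δ)) := by gcongr

end Collar

end

theorem nonlocal_poincare_general
    (len σ ρ₀ : ℝ) (hlen : 0 < len) (hσ : 0 < σ) (hρ₀ : 0 < ρ₀)
    (ρ : ℝ → ℝ)
    (hρlow : ∀ z : ℝ, |z| ≤ σ → ρ₀ ≤ ρ |z|) :
    ∃ κ : ℝ, 0 < κ ∧
      ∀ δ : ℝ, σ ≤ δ →
        ∀ u : ℝ → ℝ,
          MemLp u 2 (volume.restrict (Set.Icc (-δ) (len + δ))) →
          (∀ x ∈ Set.Icc (-δ) (len + δ) \ Set.Ioo 0 len, u x = 0) →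
          (∫⁻ x in Set.Ioo 0 len, ENNReal.ofReal ((u x) ^ 2))
            ≤ ENNReal.ofReal κ *
              ∫⁻ x in Set.Icc (-δ) (len + δ),
                ∫⁻ y in Set.Icc (-δ) (len + δ),
                  ENNReal.ofReal (ρ |y - x| * (u y - u x) ^ 2) := by
  have hN : 0 < ⌈2 * len / σ⌉₊ := Nat.ceil_pos.2 (by positivity)
  refine ⟨2 * (⌈2 * len / σ⌉₊ : ℝ) ^ 2 / (σ * ρ₀), by positivity, fun δ hσδ u hu hu0 => ?_⟩
  have hsub : Ioo 0 len ⊆ Icc (-δ) (len + δ) := Ioo_subset_Icc_self.trans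
    (Icc_subset_Icc (by linarith) (by linarith))
  obtain ⟨v, hv, hv0, huv⟩ := exists_measurable_ae_eq_restrict_of_eq_zero_on_diff
    measurableSet_Ioo measurableSet_Icc hsub hu.aestronglyMeasurable.aemeasurable hu0
  have hLHS : ∫⁻ x in Ioo 0 len, ENNReal.ofReal (u x ^ 2) = ∫⁻ x, ENNReal.ofReal (v x ^ 2) := by
    calc ∫⁻ x in Ioo 0 len, ENNReal.ofReal (u x ^ 2)
        = ∫⁻ x in Ioo 0 len, ENNReal.ofReal (v x ^ 2) := lintegral_congr_ae <| by
          filter_upwards [ae_restrict_of_ae_restrict_of_subset hsub huv] with x hx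
          rw [hx]
      _ = ∫⁻ x, ENNReal.ofReal (v x ^ 2) := setLIntegral_eq_of_support_subset fun x hx => by_contra fun h => hx (by simp [hv0 x h])
  rw [hLHS, ← nonlocalEnergy, nonlocalEnergy_congr_ae huv]
  refine lintegral_sq_le_mul_nonlocalEnergy hv hv0 hσ hσδ hρ₀ fun r hr => ?_
  simpa [abs_of_pos hr.1] using hρlow r (by rw [abs_of_pos hr.1]; exact hr.2)

/-- Nonlocal Poincaré inequality for the homogeneous volume constraint in 1D:
if the kernel `ρ ≥ 0` is bounded below by `ρ₀ > 0` on `[0,σ]` with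
`0 < σ ≤ δ`, then there exists `κ > 0`, depending only on `ρ₀`, `σ`, and the
length of `Ω`, such that every `u ∈ L²` vanishing on the interaction collar
`Ω_I = Ω̂ \ Ω` satisfies
`‖u‖²_{L²(Ω)} ≤ κ ∫∫ ρ(|y-x|)(u(y)-u(x))² dy dx`. -/
theorem nonlocal_poincare
    (len σ ρ₀ : ℝ) (hlen : 0 < len) (hσ : 0 < σ) (hρ₀ : 0 < ρ₀)
    (ρ : ℝ → ℝ) (hρmeas : Measurable ρ) (hρ0 : ∀ r, 0 ≤ ρ r)
    (hρlow : ∀ z : ℝ, |z| ≤ σ → ρ₀ ≤ ρ |z|) :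
    ∃ κ : ℝ, 0 < κ ∧
      ∀ δ : ℝ, σ ≤ δ →
        ∀ u : ℝ → ℝ,
          MemLp u 2 (volume.restrict (Set.Icc (-δ) (len + δ))) →
          (∀ x ∈ Set.Icc (-δ) (len + δ) \ Set.Ioo 0 len, u x = 0) →
          (∫⁻ x in Set.Ioo 0 len, ENNReal.ofReal ((u x) ^ 2))
            ≤ ENNReal.ofReal κ *
              ∫⁻ x in Set.Icc (-δ) (len + δ),
                ∫⁻ y in Set.Icc (-δ) (len + δ),
                  ENNReal.ofReal (ρ |y - x| * (u y - u x) ^ 2) :=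
  nonlocal_poincare_general len σ ρ₀ hlen hσ hρ₀ ρ hρlow
end
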